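/- arXiv:2307.02221 — 7 statements merged into one kernel-verified Lean document; each statement's English description precedes it below -/
import Mathlib

section
/- Let (X,d) be a metric space, let f be a compatible unbounded modulus function, let (A_k) be a sequence in CL(X) and A ∈ CL(X). Then (A_k) is Wijsman f-statistically convergent to A if and only if (A_k) is Wijsman statistically convergent to A. -/
open Filter Metric Set

/-- `f : ℝ → ℝ` is an (unbounded) modulus function (considered on `[0,∞)`):
`f x = 0 ↔ x = 0`, subadditive, increasing, continuous from the right at `0`,
and unbounded. -/
def IsModulus (f : ℝ → ℝ) : Prop :=
  (∀ x ∈ Set.Ici (0:ℝ), 0 ≤ f x) ∧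
  (∀ x ∈ Set.Ici (0:ℝ), (f x = 0 ↔ x = 0)) ∧
  (∀ x ∈ Set.Ici (0:ℝ), ∀ y ∈ Set.Ici (0:ℝ), f (x + y) ≤ f x + f y) ∧
  MonotoneOn f (Set.Ici (0:ℝ)) ∧
  ContinuousWithinAt f (Set.Ici (0:ℝ)) 0 ∧
  (∀ M : ℝ, ∃ x ∈ Set.Ici (0:ℝ), M < f x)

/-- `φ(ε) = limsup_n f(nε)/f(n)`. -/
noncomputable def modPhi (f : ℝ → ℝ) (ε : ℝ) : ℝ :=
  Filter.limsup (fun n : ℕ => f ((n : ℝ) * ε) / f (n : ℝ)) Filter.atTop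

/-- A modulus function is compatible if `φ(ε) → 0` as `ε → 0⁺`. -/
def Compatible (f : ℝ → ℝ) : Prop :=
  Filter.Tendsto (modPhi f) (nhdsWithin 0 (Set.Ioi 0)) (nhds 0)

/-- Wijsman statistical convergence of a sequence of subsets of a metric space. -/
def WijsmanStatConv {X : Type*} [MetricSpace X] (A : ℕ → Set X) (B : Set X) : Prop :=
  ∀ x : X, ∀ ε > (0:ℝ),
    Filter.Tendsto (fun n : ℕ =>
      (((Finset.range n).filter
        (fun j => ε < |infDist x (A j) - infDist x B|)).card : ℝ) / (n : ℝ))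
      Filter.atTop (nhds 0)

/-- Wijsman `f`-statistical convergence of a sequence of subsets of a metric space. -/
def WijsmanFStatConv {X : Type*} [MetricSpace X] (f : ℝ → ℝ) (A : ℕ → Set X)
    (B : Set X) : Prop :=
  ∀ x : X, ∀ ε > (0:ℝ),
    Filter.Tendsto (fun n : ℕ =>
      f ((((Finset.range n).filter
        (fun j => ε < |infDist x (A j) - infDist x B|)).card : ℝ)) / f (n : ℝ))
      Filter.atTop (nhds 0)

/-- A real sequence is `f`-strong Cesàro convergent to `L`. -/
def FStrongCesaro (f : ℝ → ℝ) (x : ℕ → ℝ) (L : ℝ) : Prop :=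
  Filter.Tendsto (fun n : ℕ =>
    f (∑ j ∈ Finset.range n, |x j - L|) / f (n : ℝ)) Filter.atTop (nhds 0)

/-- Wijsman `f`-strong Cesàro convergence. -/
def WijsmanFStrongCesaro {X : Type*} [MetricSpace X] (f : ℝ → ℝ) (A : ℕ → Set X)
    (B : Set X) : Prop :=
  ∀ x : X, FStrongCesaro f (fun j => infDist x (A j)) (infDist x B)

/-- Wijsman strong Cesàro convergence (the case `f = id`). -/
def WijsmanStrongCesaro {X : Type*} [MetricSpace X] (A : ℕ → Set X) (B : Set X) : Prop :=
  ∀ x : X,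
    Filter.Tendsto (fun n : ℕ =>
      (∑ j ∈ Finset.range n, |infDist x (A j) - infDist x B|) / (n : ℝ))
      Filter.atTop (nhds 0)

/-- A real sequence is uniformly integrable. -/
def UnifIntegrable (x : ℕ → ℝ) : Prop :=
  Filter.Tendsto (fun c : ℝ =>
    ⨆ n : ℕ, (∑ j ∈ Finset.range n, if c ≤ |x j| then |x j| else 0) / (n : ℝ))
    Filter.atTop (nhds 0)

/-- Wijsman uniform integrability. -/
def WijsmanUnifIntegrable {X : Type*} [MetricSpace X] (A : ℕ → Set X) : Prop :=
  ∀ x : X, UnifIntegrable (fun j => infDist x (A j))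

/-- A lacunary sequence: strictly increasing, starting at `0`,
with gaps `h_r = k_{r+1} - k_r → ∞`. -/
def IsLacunary (k : ℕ → ℕ) : Prop :=
  k 0 = 0 ∧ StrictMono k ∧
    Filter.Tendsto (fun r : ℕ => k (r + 1) - k r) Filter.atTop Filter.atTop

/-- The gaps `h_r` of a lacunary sequence. -/
def lacH (k : ℕ → ℕ) (r : ℕ) : ℕ := k (r + 1) - k r

/-- The blocks `I_r = (k_r, k_{r+1}]` of a lacunary sequence. -/
def lacI (k : ℕ → ℕ) (r : ℕ) : Finset ℕ := Finset.Ioc (k r) (k (r + 1))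

/-- `φ_θ(ε) = limsup_t f(h_t ε)/f(h_t)`. -/
noncomputable def modPhiTheta (f : ℝ → ℝ) (k : ℕ → ℕ) (ε : ℝ) : ℝ :=
  Filter.limsup (fun t : ℕ => f ((lacH k t : ℝ) * ε) / f ((lacH k t : ℝ))) Filter.atTop

/-- `f` is `θ`-compatible if `φ_θ(ε) → 0` as `ε → 0⁺`. -/
def ThetaCompatible (f : ℝ → ℝ) (k : ℕ → ℕ) : Prop :=
  Filter.Tendsto (modPhiTheta f k) (nhdsWithin 0 (Set.Ioi 0)) (nhds 0)

/-- Wijsman `θ`-lacunary statistical convergence. -/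
def WijsmanLacStatConv {X : Type*} [MetricSpace X] (k : ℕ → ℕ) (A : ℕ → Set X)
    (B : Set X) : Prop :=
  ∀ x : X, ∀ ε > (0:ℝ),
    Filter.Tendsto (fun r : ℕ =>
      (((lacI k r).filter
        (fun j => ε < |infDist x (A j) - infDist x B|)).card : ℝ) / (lacH k r : ℝ))
      Filter.atTop (nhds 0)

/-- Wijsman `θ`-lacunary `f`-statistical convergence. -/
def WijsmanLacFStatConv {X : Type*} [MetricSpace X] (f : ℝ → ℝ) (k : ℕ → ℕ)
    (A : ℕ → Set X) (B : Set X) : Prop :=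
  ∀ x : X, ∀ ε > (0:ℝ),
    Filter.Tendsto (fun r : ℕ =>
      f ((((lacI k r).filter
        (fun j => ε < |infDist x (A j) - infDist x B|)).card : ℝ)) / f ((lacH k r : ℝ)))
      Filter.atTop (nhds 0)

/-- Wijsman `θ`-lacunary `f`-strong Cesàro convergence. -/
def WijsmanLacFStrongCesaro {X : Type*} [MetricSpace X] (f : ℝ → ℝ) (k : ℕ → ℕ)
    (A : ℕ → Set X) (B : Set X) : Prop :=
  ∀ x : X,
    Filter.Tendsto (fun r : ℕ =>
      f (∑ j ∈ lacI k r, |infDist x (A j) - infDist x B|) / f ((lacH k r : ℝ)))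
      Filter.atTop (nhds 0)

/-- Wijsman `θ`-lacunary strong Cesàro convergence (the case `f = id`). -/
def WijsmanLacStrongCesaro {X : Type*} [MetricSpace X] (k : ℕ → ℕ)
    (A : ℕ → Set X) (B : Set X) : Prop :=
  ∀ x : X,
    Filter.Tendsto (fun r : ℕ =>
      (∑ j ∈ lacI k r, |infDist x (A j) - infDist x B|) / (lacH k r : ℝ))
      Filter.atTop (nhds 0)

/-- A real sequence is `θ`-lacunary uniformly integrable. -/
def LacUnifIntegrable (k : ℕ → ℕ) (x : ℕ → ℝ) : Prop :=
  Filter.Tendsto (fun M : ℝ =>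
    ⨆ t : ℕ, (∑ j ∈ lacI k t, if M ≤ |x j| then |x j| else 0) / (lacH k t : ℝ))
    Filter.atTop (nhds 0)

/-- Wijsman `θ`-lacunary uniform integrability. -/
def WijsmanLacUnifIntegrable {X : Type*} [MetricSpace X] (k : ℕ → ℕ)
    (A : ℕ → Set X) : Prop :=
  ∀ x : X, LacUnifIntegrable k (fun j => infDist x (A j))


/-! Let `K n` be the number of exceptional indices below `n`. If `K n ≥ δ n` with `m δ ≥ 1`,
subadditivity and monotonicity of `f` give `f n ≤ m f (K n)`, so `f (K n) / f n` stays
above `1 / m`; hence `f`-density zero implies density zero. Conversely, if `K n ≤ ε n` then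
`f (K n) / f n ≤ f (n ε) / f n`, whose limsup `φ ε` is as small as we like by compatibility. -/

namespace IsModulus

variable {f : ℝ → ℝ}

theorem nonneg (hf : IsModulus f) {x : ℝ} (hx : 0 ≤ x) : 0 ≤ f x := hf.1 x hx

theorem map_zero (hf : IsModulus f) : f 0 = 0 := (hf.2.1 0 self_mem_Ici).2 rfl

theorem pos (hf : IsModulus f) {x : ℝ} (hx : 0 < x) : 0 < f x :=
  (hf.nonneg hx.le).lt_of_ne fun h => hx.ne' ((hf.2.1 x hx.le).1 h.symm)

theorem mono (hf : IsModulus f) {x y : ℝ} (hx : 0 ≤ x) (hxy : x ≤ y) : f x ≤ f y :=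
  hf.2.2.2.1 hx (hx.trans hxy) hxy

theorem map_nat_mul_le (hf : IsModulus f) (m : ℕ) {x : ℝ} (hx : 0 ≤ x) :
    f (m * x) ≤ m * f x := by
  induction m with
  | zero => simp [hf.map_zero]
  | succ m ih =>
    calc f ((m + 1 : ℕ) * x) = f (m * x + x) := by congr 1; push_cast; ring
      _ ≤ f (m * x) + f x := hf.2.2.1 _ (show 0 ≤ (m : ℝ) * x by positivity) _ hx
      _ ≤ (m + 1 : ℕ) * f x := by push_cast; linarith

theorem inv_natCast_le_apply_div (hf : IsModulus f) {m : ℕ} (hm : 0 < m) {x y : ℝ}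
    (hx : 0 < x) (hy : 0 ≤ y) (hxy : x ≤ m * y) : (m : ℝ)⁻¹ ≤ f y / f x := by
  rw [le_div_iff₀ (hf.pos hx), inv_mul_le_iff₀ (Nat.cast_pos.2 hm)]
  exact (hf.mono hx.le hxy).trans (hf.map_nat_mul_le m hy)

theorem tendsto_div_of_tendsto_apply_div (hf : IsModulus f) {c : ℕ → ℝ} (hc : ∀ n, 0 ≤ c n)
    (h : Tendsto (fun n : ℕ => f (c n) / f n) atTop (nhds 0)) :
    Tendsto (fun n : ℕ => c n / n) atTop (nhds 0) := by
  refine tendsto_order.2 ⟨fun a ha => .of_forall fun n => ha.trans_le (by have := hc n; positivity),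
    fun δ hδ => ?_⟩
  obtain ⟨m, hm⟩ := exists_nat_gt δ⁻¹
  have hm0 : 0 < m := Nat.cast_pos.1 ((inv_pos.2 hδ).trans hm)
  filter_upwards [h.eventually (gt_mem_nhds (inv_pos.2 (Nat.cast_pos.2 hm0))),
    eventually_gt_atTop 0] with n hfn hn
  have hn' : (0 : ℝ) < n := Nat.cast_pos.2 hn
  by_contra! hδc
  have hnc : (n : ℝ) ≤ m * c n := by
    rw [le_div_iff₀ hn'] at hδc
    nlinarith [(inv_lt_iff_one_lt_mul₀ hδ).1 hm, hc n]
  exact hfn.not_ge (hf.inv_natCast_le_apply_div hm0 hn' (hc n) hnc)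

theorem apply_nat_mul_div_le_one (hf : IsModulus f) {ε : ℝ} (hε₀ : 0 ≤ ε) (hε₁ : ε ≤ 1)
    (n : ℕ) : f (n * ε) / f n ≤ 1 := by
  rcases (Nat.cast_nonneg n : (0 : ℝ) ≤ n).eq_or_lt with hn | hn
  · simp [← hn, hf.map_zero]
  · exact div_le_one_of_le₀ (hf.mono (by positivity) (mul_le_of_le_one_right hn.le hε₁))
      (hf.nonneg hn.le)

end IsModulus

theorem Compatible.exists_modPhi_lt {f : ℝ → ℝ} (hfc : Compatible f) {δ : ℝ} (hδ : 0 < δ) :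
    ∃ ε, 0 < ε ∧ ε ≤ 1 ∧ modPhi f ε < δ := by
  have hsmall : ∀ᶠ ε in nhdsWithin 0 (Ioi 0), ε ∈ Ioc (0 : ℝ) 1 := Ioc_mem_nhdsGT zero_lt_one
  obtain ⟨ε, hφ, hε₀, hε₁⟩ := ((hfc.eventually (gt_mem_nhds hδ)).and hsmall).exists
  exact ⟨ε, hε₀, hε₁, hφ⟩

theorem Compatible.tendsto_apply_div_of_tendsto_div {f : ℝ → ℝ} (hfc : Compatible f)
    (hf : IsModulus f) {c : ℕ → ℝ} (hc : ∀ n, 0 ≤ c n)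
    (h : Tendsto (fun n : ℕ => c n / n) atTop (nhds 0)) :
    Tendsto (fun n : ℕ => f (c n) / f n) atTop (nhds 0) := by
  refine tendsto_order.2 ⟨fun a ha => .of_forall fun n =>
    ha.trans_le (div_nonneg (hf.nonneg (hc n)) (hf.nonneg n.cast_nonneg)), fun δ hδ => ?_⟩
  obtain ⟨ε, hε₀, hε₁, hφ⟩ := hfc.exists_modPhi_lt hδ
  have hlimsup : ∀ᶠ n : ℕ in atTop, f (n * ε) / f n < δ :=
    eventually_lt_of_limsup_lt hφ
      (isBoundedUnder_of ⟨1, hf.apply_nat_mul_div_le_one hε₀.le hε₁⟩)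
  filter_upwards [hlimsup, h.eventually (gt_mem_nhds hε₀), eventually_gt_atTop 0]
    with n hφn hcn hn
  have hn' : (0 : ℝ) < n := Nat.cast_pos.2 hn
  have hcε : c n ≤ n * ε := by
    rw [div_lt_iff₀ hn'] at hcn
    linarith
  calc f (c n) / f n ≤ f (n * ε) / f n := by
        gcongr
        exacts [(hf.pos hn').le, hf.mono (hc n) hcε]
    _ < δ := hφn

theorem wijsman_fstat_iff_stat_of_compatible_general {X : Type*} [MetricSpace X]
    (f : ℝ → ℝ) (hf : IsModulus f) (hfc : Compatible f)
    (A : ℕ → Set X) (B : Set X) :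
    WijsmanFStatConv f A B ↔ WijsmanStatConv A B :=
  forall_congr' fun _ => forall₂_congr fun _ _ =>
    ⟨hf.tendsto_div_of_tendsto_apply_div (fun _ => Nat.cast_nonneg _),
      hfc.tendsto_apply_div_of_tendsto_div hf (fun _ => Nat.cast_nonneg _)⟩

theorem wijsman_fstat_iff_stat_of_compatible {X : Type*} [MetricSpace X]
    (f : ℝ → ℝ) (hf : IsModulus f) (hfc : Compatible f)
    (A : ℕ → Set X) (B : Set X)
    (hA : ∀ n, (A n).Nonempty ∧ IsClosed (A n)) (hB : B.Nonempty ∧ IsClosed B) :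
    WijsmanFStatConv f A B ↔ WijsmanStatConv A B :=
  wijsman_fstat_iff_stat_of_compatible_general f hf hfc A B
end

section
/- Let f be an unbounded modulus function that is not compatible. Then there exists a sequence (B_k) of nonempty closed subsets of ℝ (with the usual metric) and B = {0} such that (B_k) is Wijsman statistically convergent to B but (B_k) is not Wijsman f-statistically convergent to B. Consequently, if every Wijsman statistically convergent sequence of closed subsets of ℝ is Wijsman f-statistically convergent to the same limit, then f is compatible. -/
open Filter Metric Set

lemma key_of_not_compatible (f : ℝ → ℝ)
    (hf0 : ∀ x ∈ Set.Ici (0:ℝ), 0 ≤ f x)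
    (hfpos : 0 < f 1)
    (hmono : MonotoneOn f (Set.Ici (0:ℝ)))
    (hnc : ¬ Compatible f) :
    ∃ c > (0:ℝ), ∀ j N : ℕ, ∃ n : ℕ, N ≤ n ∧ 1 ≤ n ∧
      c * f (n : ℝ) ≤ f ((n : ℝ) / ((j : ℝ) + 1)) := by
  -- extract frequently |modPhi| ≥ c₀
  rw [Compatible, Metric.tendsto_nhds] at hnc
  push_neg at hnc
  obtain ⟨c₀, hc₀, hfreq⟩ := hnc
  simp only [not_eventually, not_lt, Real.dist_eq, sub_zero] at hfreq
  refine ⟨c₀ / 2, by linarith, fun j N => ?_⟩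
  -- pick ε ∈ (0, min (1/(j+1)) 1)
  have hδ : (0:ℝ) < min (1 / ((j:ℝ)+1)) 1 := by
    have : (0:ℝ) < (j:ℝ) + 1 := by positivity
    simp [this]
  obtain ⟨ε, hεmem, hεbig⟩ := Filter.frequently_iff.1 hfreq
    (Ioo_mem_nhdsGT_of_mem (⟨le_refl 0, hδ⟩ : (0:ℝ) ∈ Set.Ico 0 _))
  obtain ⟨hε0, hεlt⟩ := hεmem
  have hεle1 : ε ≤ 1 := le_of_lt (lt_of_lt_of_le hεlt (min_le_right _ _))
  have hεltj : ε ≤ 1 / ((j:ℝ)+1) := le_of_lt (lt_of_lt_of_le hεlt (min_le_left _ _))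
  set u : ℕ → ℝ := fun n => f ((n:ℝ) * ε) / f (n:ℝ) with hu
  have hun : ∀ n, 0 ≤ u n := fun n =>
    div_nonneg (hf0 _ (Set.mem_Ici.2 (by positivity))) (hf0 _ (Set.mem_Ici.2 (by positivity)))
  have hub : ∀ n : ℕ, 1 ≤ n → u n ≤ 1 := by
    intro n hn
    have h1n : (1:ℝ) ≤ (n:ℝ) := by exact_mod_cast hn
    have hfn : 0 < f (n:ℝ) := lt_of_lt_of_le hfpos
      (hmono (Set.mem_Ici.2 (by norm_num)) (Set.mem_Ici.2 (by positivity)) h1n)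
    have : f ((n:ℝ) * ε) ≤ f (n:ℝ) := hmono (Set.mem_Ici.2 (by positivity)) (Set.mem_Ici.2 (by positivity))
      (by nlinarith)
    rw [hu]; exact div_le_one_of_le₀ this (le_of_lt hfn)
  have hbdd : IsBoundedUnder (· ≤ ·) atTop u := by
    refine ⟨1, Filter.eventually_atTop.2 ⟨1, fun n hn => hub n hn⟩⟩
  have hphi_nonneg : 0 ≤ modPhi f ε :=
    le_limsup_of_frequently_le (Frequently.of_forall hun) hbdd
  have hphi_ge : c₀ ≤ modPhi f ε := by
    have := hεbig; rwa [abs_of_nonneg hphi_nonneg] at this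
  -- frequently u n ≥ c₀/2
  have hfrequ : ∃ᶠ n in atTop, c₀ / 2 ≤ u n := by
    by_contra hcon
    simp only [not_frequently, not_le] at hcon
    have : modPhi f ε ≤ c₀ / 2 :=
      limsup_le_of_le (isCoboundedUnder_le_of_le _ hun) (hcon.mono fun n h => le_of_lt h)
    linarith
  obtain ⟨n, hnN, hn⟩ := Filter.frequently_atTop.1 hfrequ (max N 1)
  refine ⟨n, le_trans (le_max_left _ _) hnN, le_trans (le_max_right _ _) hnN, ?_⟩
  have h1n : (1:ℝ) ≤ (n:ℝ) := by exact_mod_cast le_trans (le_max_right _ _) hnN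
  have hfn : 0 < f (n:ℝ) := lt_of_lt_of_le hfpos (hmono (Set.mem_Ici.2 (by norm_num)) (Set.mem_Ici.2 (by positivity)) h1n)
  have h1 : c₀ / 2 * f (n:ℝ) ≤ f ((n:ℝ) * ε) := by
    rw [hu] at hn; exact (le_div_iff₀ hfn).1 hn
  refine le_trans h1 (hmono (Set.mem_Ici.2 (by positivity)) (Set.mem_Ici.2 (by positivity)) ?_)
  have hjpos : (0:ℝ) < (j:ℝ) + 1 := by positivity
  rw [div_eq_mul_inv]
  have : ε ≤ ((j:ℝ)+1)⁻¹ := by rw [← one_div]; exact hεltj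
  have hn0 : (0:ℝ) ≤ (n:ℝ) := by positivity
  nlinarith


lemma construction (f : ℝ → ℝ)
    (hf0 : ∀ x ∈ Set.Ici (0:ℝ), 0 ≤ f x)
    (hfpos : 0 < f 1)
    (hmono : MonotoneOn f (Set.Ici (0:ℝ)))
    (key : ∃ c > (0:ℝ), ∀ j N : ℕ, ∃ n : ℕ, N ≤ n ∧ 1 ≤ n ∧
      c * f (n : ℝ) ≤ f ((n : ℝ) / ((j : ℝ) + 1))) :
    ∃ B : ℕ → Set ℝ, (∀ n, (B n).Nonempty ∧ IsClosed (B n)) ∧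
      WijsmanStatConv B ({0} : Set ℝ) ∧ ¬ WijsmanFStatConv f B ({0} : Set ℝ) := by
  classical
  obtain ⟨c, hc, key⟩ := key
  choose F hF1 hF2 hF3 using key
  -- the rapidly growing sequence
  obtain ⟨seq, seq0, seqS⟩ : ∃ g : ℕ → ℕ, g 0 = 0 ∧
      ∀ j, g (j+1) = F j (max ((j+1)*(2*g j+2)) ((j+1)*(j+1))) :=
    ⟨fun j => Nat.rec 0 (fun j ih => F j (max ((j+1)*(2*ih+2)) ((j+1)*(j+1)))) j,
      rfl, fun _ => rfl⟩
  have hA : ∀ j, (j+1)*(2*seq j+2) ≤ seq (j+1) := by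
    intro j; rw [seqS]; exact le_trans (le_max_left _ _) (hF1 _ _)
  have hB : ∀ j, (j+1)*(j+1) ≤ seq (j+1) := by
    intro j; rw [seqS]; exact le_trans (le_max_right _ _) (hF1 _ _)
  have hC : ∀ j, 1 ≤ seq (j+1) := by intro j; rw [seqS]; exact hF2 _ _
  have hD : ∀ j, c * f (seq (j+1) : ℕ) ≤ f ((seq (j+1) : ℝ) / ((j:ℝ)+1)) := by
    intro j; rw [seqS]; exact hF3 _ _
  have hgrow : ∀ j, 2*seq j + 2 ≤ seq (j+1) := by
    intro j; refine le_trans ?_ (hA j); nlinarith [Nat.zero_le j]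
  have hstrict : StrictMono seq := strictMono_nat_of_lt_succ (by
    intro j; have := hgrow j; omega)
  have hseq_ge : ∀ j, j ≤ seq j := fun j => by
    cases j with
    | zero => omega
    | succ i => have := hB i; nlinarith
  have hsq : ∀ j, j*j ≤ seq j := fun j => by
    cases j with
    | zero => simp [seq0]
    | succ i => exact hB i
  -- block lengths
  obtain ⟨m, hm_eq⟩ : ∃ m : ℕ → ℕ, ∀ j, m j = min (seq j / j + 1) (seq j) :=
    ⟨_, fun _ => rfl⟩
  have hm_le : ∀ j, m j ≤ seq j := fun j => by rw [hm_eq]; exact min_le_right _ _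
  have hm1 : m 1 = seq 1 := by rw [hm_eq, Nat.div_one]; omega
  have hblock : ∀ j, seq j + m (j+1) ≤ seq (j+1) := by
    intro j
    cases j with
    | zero => show seq 0 + m 1 ≤ seq 1; rw [seq0, hm1]; omega
    | succ i =>
      show seq (i+1) + m (i+2) ≤ seq (i+2)
      have h2 : 2 ≤ i + 2 := by omega
      have hdl : seq (i+2) / (i+2) ≤ seq (i+2) / 2 := Nat.div_le_div_left h2 (by omega)
      have hml : m (i+2) ≤ seq (i+2) / (i+2) + 1 := by rw [hm_eq]; exact min_le_left _ _
      have hd2 : 2 * (seq (i+2) / 2) ≤ seq (i+2) ∧ seq (i+2) ≤ 2 * (seq (i+2)/2) + 1 := by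
        omega
      have hg : 2 * seq (i+1) + 2 ≤ seq (i+2) := hgrow (i+1)
      omega
  -- real bounds on m
  have hm_ge_real : ∀ j, 1 ≤ j → (seq j : ℝ) / (j:ℝ) ≤ (m j : ℝ) := by
    intro j hj
    have hjR : (0:ℝ) < (j:ℝ) := by exact_mod_cast hj
    have hmin : (m j : ℝ) = min ((seq j / j + 1 : ℕ) : ℝ) ((seq j : ℕ) : ℝ) := by
      rw [hm_eq]; push_cast [Nat.cast_min]; ring_nf
    rw [hmin]
    refine le_min ?_ ?_
    · have hnat : seq j < (seq j / j + 1) * j := by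
        calc seq j = j * (seq j / j) + seq j % j := (Nat.div_add_mod _ _).symm
        _ < j * (seq j / j) + j := by
            have : seq j % j < j := Nat.mod_lt _ (by omega)
            omega
        _ = (seq j / j + 1) * j := by ring
      rw [div_le_iff₀ hjR]
      calc (seq j : ℝ) ≤ ((seq j / j + 1) * j : ℕ) := by exact_mod_cast le_of_lt hnat
      _ = ((seq j / j + 1 : ℕ) : ℝ) * (j:ℝ) := by push_cast; ring
    · exact div_le_self (by positivity) (by exact_mod_cast hj)
  have hm_le_real : ∀ j, (m j : ℝ) ≤ (seq j : ℝ) / (j:ℝ) + 1 := by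
    intro j
    have h1 : (m j : ℕ) ≤ seq j / j + 1 := by rw [hm_eq]; exact min_le_left _ _
    calc (m j : ℝ) ≤ ((seq j / j : ℕ) : ℝ) + 1 := by exact_mod_cast h1
    _ ≤ (seq j : ℝ) / (j:ℝ) + 1 := by
        linarith [(Nat.cast_div_le : ((seq j / j : ℕ) : ℝ) ≤ (seq j : ℝ) / (j:ℝ))]
  -- the exceptional set and counting function
  obtain ⟨Sp, hSp⟩ : ∃ Sp : ℕ → Prop, ∀ k, Sp k ↔ ∃ j, seq j - m j ≤ k ∧ k < seq j :=
    ⟨_, fun _ => Iff.rfl⟩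
  haveI : DecidablePred Sp := Classical.decPred _
  obtain ⟨cnt, hcnt⟩ : ∃ cnt : ℕ → ℕ, ∀ n, cnt n = ((Finset.range n).filter Sp).card :=
    ⟨_, fun _ => rfl⟩
  have hlow : ∀ j, m j ≤ cnt (seq j) := by
    intro j
    have hsub : Finset.Ico (seq j - m j) (seq j) ⊆ (Finset.range (seq j)).filter Sp := by
      intro k hk
      rw [Finset.mem_Ico] at hk
      exact Finset.mem_filter.2 ⟨Finset.mem_range.2 hk.2, (hSp k).2 ⟨j, hk.1, hk.2⟩⟩
    have h2 := Finset.card_le_card hsub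
    rw [hcnt]
    rwa [Nat.card_Ico, Nat.sub_sub_self (hm_le j)] at h2
  obtain ⟨M, hM_eq⟩ : ∃ M : ℕ → ℕ, ∀ j, M j = ∑ i ∈ Finset.range (j+1), m i :=
    ⟨_, fun _ => rfl⟩
  have hMsucc : ∀ j, M (j+1) = M j + m (j+1) := by
    intro j; rw [hM_eq, hM_eq]; exact Finset.sum_range_succ _ _
  have hM0 : M 0 = 0 := by
    have hm0 : m 0 = 0 := by rw [hm_eq]; simp [seq0]
    rw [hM_eq]; simp [hm0]
  have hMle : ∀ j, M j ≤ 2 * seq j + 1 := by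
    intro j
    induction j with
    | zero => rw [hM0]; omega
    | succ i ih =>
      have h1 := hMsucc i
      have h2 := hm_le (i+1)
      have h3 := hgrow i
      omega
  have hup : ∀ j n, n ≤ seq (j+1) → cnt n ≤ M j + (n - (seq (j+1) - m (j+1))) := by
    intro j n hn
    have hsub : (Finset.range n).filter Sp ⊆
        ((Finset.range (j+1)).biUnion fun i => Finset.Ico (seq i - m i) (seq i)) ∪
          Finset.Ico (seq (j+1) - m (j+1)) n := by
      intro k hk
      obtain ⟨hkn, hSpk⟩ := Finset.mem_filter.1 hk
      obtain ⟨i, hki1, hki2⟩ := (hSp k).1 hSpk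
      rw [Finset.mem_range] at hkn
      rcases lt_trichotomy i (j+1) with hij | hij | hij
      · exact Finset.mem_union.2 (Or.inl (Finset.mem_biUnion.2
          ⟨i, Finset.mem_range.2 hij, Finset.mem_Ico.2 ⟨hki1, hki2⟩⟩))
      · subst hij
        exact Finset.mem_union.2 (Or.inr (Finset.mem_Ico.2 ⟨hki1, hkn⟩))
      · exfalso
        obtain ⟨t, rfl⟩ : ∃ t, i = t + 1 := ⟨i - 1, by omega⟩
        have h1 : seq (j+1) ≤ seq t := hstrict.monotone (show j+1 ≤ t by omega)
        have h2 := hblock t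
        omega
    rw [hcnt]
    calc ((Finset.range n).filter Sp).card ≤ _ := Finset.card_le_card hsub
    _ ≤ (((Finset.range (j+1)).biUnion fun i => Finset.Ico (seq i - m i) (seq i)).card)
        + (Finset.Ico (seq (j+1) - m (j+1)) n).card := Finset.card_union_le _ _
    _ ≤ M j + (n - (seq (j+1) - m (j+1))) := by
        refine add_le_add ?_ ?_
        · refine le_trans (Finset.card_biUnion_le) ?_
          rw [hM_eq]
          refine Finset.sum_le_sum ?_
          intro i _
          rw [Nat.card_Ico]
          omega
        · rw [Nat.card_Ico]
  -- density bound
  have hden : ∀ j n, 1 ≤ j → seq j < n → n ≤ seq (j+1) →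
      (cnt n : ℝ) / (n:ℝ) ≤ 4 / (j:ℝ) := by
    intro j n hj hn1 hn2
    obtain ⟨i, rfl⟩ : ∃ i, j = i+1 := ⟨j-1, by omega⟩
    have hjR : (0:ℝ) < (i:ℝ) + 1 := by positivity
    have hsj : 1 ≤ seq (i+1) := hC i
    have hsjR : (0:ℝ) < (seq (i+1) : ℝ) := by exact_mod_cast hsj
    have hnR : (0:ℝ) < (n : ℝ) := by
      have : 1 ≤ n := by omega
      exact_mod_cast this
    have hs'R : (0:ℝ) < (seq (i+2) : ℝ) := by exact_mod_cast hC (i+1)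
    -- bound on M (i+1) : M (i+1) * (i+1) ≤ 2 * seq (i+1)
    have fA : ((i:ℝ)+1) * (2 * (seq i : ℝ) + 2) ≤ (seq (i+1) : ℝ) := by
      exact_mod_cast hA i
    have fM : (M i : ℝ) ≤ 2 * (seq i : ℝ) + 1 := by exact_mod_cast hMle i
    have fmle : (m (i+1) : ℝ) ≤ (seq (i+1) : ℝ) / ((i:ℝ)+1) + 1 := by
      have := hm_le_real (i+1); push_cast at this ⊢; convert this using 3 <;> push_cast <;> ring
    have fdiv : ((seq (i+1) : ℝ) / ((i:ℝ)+1)) * ((i:ℝ)+1) = (seq (i+1) : ℝ) :=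
      div_mul_cancel₀ _ (ne_of_gt hjR)
    have hMj : (M (i+1) : ℝ) * ((i:ℝ)+1) ≤ 2 * (seq (i+1) : ℝ) := by
      have hMs : (M (i+1) : ℝ) = (M i : ℝ) + (m (i+1) : ℝ) := by exact_mod_cast hMsucc i
      nlinarith [Nat.cast_nonneg (α := ℝ) (M i), Nat.cast_nonneg (α := ℝ) (m (i+1)),
        Nat.cast_nonneg (α := ℝ) (seq i)]
    -- bound on the partial block term
    obtain ⟨a, ha_def⟩ : ∃ a, a = seq (i+2) - m (i+2) := ⟨_, rfl⟩
    obtain ⟨tn, htn_def⟩ : ∃ t, t = n - a := ⟨_, rfl⟩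
    have hma : m (i+2) ≤ seq (i+2) := hm_le (i+2)
    have htns : tn * seq (i+2) ≤ m (i+2) * n := by
      by_cases hcase : n ≤ a
      · have : tn = 0 := by omega
        simp [this]
      · have han : a ≤ n := by omega
        have e1 : tn * seq (i+2) = n * seq (i+2) - a * seq (i+2) := by
          rw [htn_def, Nat.sub_mul]
        have e3 : a * n ≤ a * seq (i+2) := Nat.mul_le_mul_left a hn2
        have e4 : m (i+2) * n = (seq (i+2) - a) * n := by
          congr 1; omega
        have e5 : (seq (i+2) - a) * n = seq (i+2) * n - a * n := by rw [Nat.sub_mul]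
        have e6 : a * seq (i+2) ≤ n * seq (i+2) :=
          Nat.mul_le_mul_right _ han
        rw [e1, e4, e5]
        have : n * seq (i+2) = seq (i+2) * n := Nat.mul_comm _ _
        omega
    have htnR : (tn : ℝ) / (n : ℝ) ≤ (m (i+2) : ℝ) / (seq (i+2) : ℝ) := by
      rw [div_le_div_iff₀ hnR hs'R]
      exact_mod_cast htns
    -- m (i+2) / seq (i+2) ≤ 2/(i+1)
    have fmle2 : (m (i+2) : ℝ) ≤ (seq (i+2) : ℝ) / ((i:ℝ)+2) + 1 := by
      have := hm_le_real (i+2); push_cast at this ⊢; convert this using 3 <;> push_cast <;> ring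
    have fdiv2 : ((seq (i+2) : ℝ) / ((i:ℝ)+2)) * ((i:ℝ)+2) = (seq (i+2) : ℝ) :=
      div_mul_cancel₀ _ (by positivity)
    have hge2 : ((i:ℝ)+2) ≤ (seq (i+2) : ℝ) := by
      have := hseq_ge (i+2); exact_mod_cast (by push_cast; exact_mod_cast this : ((i+2:ℕ):ℝ) ≤ (seq (i+2):ℝ))
    have hm2s : (m (i+2) : ℝ) / (seq (i+2) : ℝ) ≤ 2 / ((i:ℝ)+1) := by
      rw [div_le_div_iff₀ hs'R hjR]
      nlinarith [Nat.cast_nonneg (α := ℝ) (m (i+2))]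
    -- combine
    have e0n : cnt n ≤ M (i+1) + tn := by
      rw [htn_def, ha_def]; exact hup (i+1) n hn2
    have e0 : (cnt n : ℝ) ≤ (M (i+1) : ℝ) + (tn : ℝ) := by
      have h := (Nat.cast_le (α := ℝ)).2 e0n
      push_cast at h; exact h
    have hMn : (M (i+1) : ℝ) / (n:ℝ) ≤ (M (i+1) : ℝ) / (seq (i+1) : ℝ) := by
      apply div_le_div_of_nonneg_left (Nat.cast_nonneg _) hsjR
      exact_mod_cast le_of_lt hn1
    have hMq : (M (i+1) : ℝ) / (seq (i+1) : ℝ) ≤ 2 / ((i:ℝ)+1) := by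
      rw [div_le_div_iff₀ hsjR hjR]
      exact hMj
    calc (cnt n : ℝ) / (n:ℝ) ≤ ((M (i+1) : ℝ) + (tn : ℝ)) / (n:ℝ) := by gcongr
    _ = (M (i+1) : ℝ) / (n:ℝ) + (tn : ℝ) / (n:ℝ) := add_div _ _ _
    _ ≤ 2 / ((i:ℝ)+1) + 2 / ((i:ℝ)+1) :=
        add_le_add (le_trans hMn hMq) (le_trans htnR hm2s)
    _ ≤ 4 / ((i:ℝ)+1) := by rw [← add_div]; gcongr; norm_num
    _ = 4 / (((i+1:ℕ)):ℝ) := by push_cast; ring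
  -- the counting function has density zero
  have hcnt_tendsto : Filter.Tendsto (fun n : ℕ => (cnt n : ℝ)/(n:ℝ)) Filter.atTop (nhds 0) := by
    rw [Metric.tendsto_atTop]
    intro ε hε
    obtain ⟨j₀, hj₀⟩ := exists_nat_gt (4/ε)
    have hj₀1 : 1 ≤ j₀ := by
      by_contra h
      have : j₀ = 0 := by omega
      rw [this] at hj₀
      have : (0:ℝ) < 4/ε := by positivity
      norm_num at hj₀
      linarith
    refine ⟨seq j₀ + 1, fun n hn => ?_⟩
    have hex : ∃ i, n ≤ seq i := ⟨n, hseq_ge n⟩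
    have hspec : n ≤ seq (Nat.find hex) := Nat.find_spec hex
    have hn1 : 1 ≤ n := by
      have := hC (j₀ - 1)
      have hj : seq j₀ ≥ 1 := by
        obtain ⟨t, rfl⟩ : ∃ t, j₀ = t + 1 := ⟨j₀ - 1, by omega⟩
        exact hC t
      omega
    have hi₀ : Nat.find hex ≠ 0 := by
      intro h
      rw [h, seq0] at hspec; omega
    obtain ⟨j, hji⟩ : ∃ j, Nat.find hex = j + 1 := ⟨Nat.find hex - 1, by omega⟩
    have hjlt : seq j < n := by
      have := Nat.find_min hex (show j < Nat.find hex by omega)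
      omega
    have hjle : n ≤ seq (j+1) := by rw [← hji]; exact hspec
    have hjJ : j₀ ≤ j := by
      by_contra h
      have : seq (j+1) ≤ seq j₀ := hstrict.monotone (by omega)
      omega
    have hj1 : 1 ≤ j := le_trans hj₀1 hjJ
    have hd := hden j n hj1 hjlt hjle
    have hcnn : (0:ℝ) ≤ (cnt n : ℝ)/(n:ℝ) := by positivity
    rw [Real.dist_eq, sub_zero, abs_of_nonneg hcnn]
    have h4j : (4:ℝ)/(j:ℝ) ≤ 4/(j₀:ℝ) := by
      apply div_le_div_of_nonneg_left (by norm_num) (by exact_mod_cast hj₀1)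
      exact_mod_cast hjJ
    have hj₀R : (0:ℝ) < (j₀:ℝ) := by exact_mod_cast hj₀1
    have h4ε : (4:ℝ)/(j₀:ℝ) < ε := by
      rw [div_lt_iff₀ hj₀R]
      rw [div_lt_iff₀ hε] at hj₀
      linarith
    linarith
  -- the sequence of sets
  obtain ⟨B, hB_eq⟩ : ∃ B : ℕ → Set ℝ, ∀ k, B k = if Sp k then ({1} : Set ℝ) else {0} :=
    ⟨_, fun _ => rfl⟩
  have hfseq : ∀ j, 1 ≤ j → 0 < f ((seq j : ℕ) : ℝ) := by
    intro j hj
    have h1 : (1:ℝ) ≤ ((seq j : ℕ) : ℝ) := by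
      have : 1 ≤ seq j := by
        obtain ⟨t, rfl⟩ : ∃ t, j = t + 1 := ⟨j - 1, by omega⟩
        exact hC t
      exact_mod_cast this
    exact lt_of_lt_of_le hfpos (hmono (Set.mem_Ici.2 (by norm_num))
      (Set.mem_Ici.2 (by positivity)) h1)
  refine ⟨B, ?_, ?_, ?_⟩
  · intro n
    rw [hB_eq]
    split <;> exact ⟨Set.singleton_nonempty _, isClosed_singleton⟩
  · -- Wijsman statistical convergence
    intro x ε hε
    apply tendsto_of_tendsto_of_tendsto_of_le_of_le' tendsto_const_nhds hcnt_tendsto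
    · filter_upwards with n
      positivity
    · filter_upwards [Filter.eventually_ge_atTop 1] with n hn
      have hcard : ((Finset.range n).filter
          (fun j => ε < |infDist x (B j) - infDist x ({0}:Set ℝ)|)).card ≤ cnt n := by
        rw [hcnt]
        apply Finset.card_le_card
        intro k hk
        obtain ⟨h1, h2⟩ := Finset.mem_filter.1 hk
        refine Finset.mem_filter.2 ⟨h1, ?_⟩
        by_contra hSpk
        rw [hB_eq, if_neg hSpk] at h2
        simp only [sub_self, abs_zero] at h2
        linarith
      gcongr
  · -- not Wijsman f-statistically convergent
    intro hFc
    have h0 := hFc 0 (1/2) (by norm_num)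
    have hEq : ∀ n, ((Finset.range n).filter
        (fun j => (1:ℝ)/2 < |infDist (0:ℝ) (B j) - infDist (0:ℝ) ({0}:Set ℝ)|)).card
        = cnt n := by
      intro n
      rw [hcnt]
      congr 1
      apply Finset.filter_congr
      intro k _
      rw [hB_eq]
      by_cases hSpk : Sp k
      · rw [if_pos hSpk]
        simp only [Metric.infDist_singleton, Real.dist_eq, hSpk, iff_true]
        norm_num
      · rw [if_neg hSpk]
        simp only [sub_self, abs_zero, hSpk, iff_false, not_lt]
        norm_num
    rw [Metric.tendsto_atTop] at h0
    obtain ⟨N, hN⟩ := h0 c hc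
    obtain ⟨t, hjt⟩ : ∃ t, max N 1 = t + 1 := ⟨max N 1 - 1, by omega⟩
    have hNle : N ≤ seq (t+1) := by
      have h1 : N ≤ t + 1 := by omega
      exact le_trans h1 (hseq_ge (t+1))
    have hlt := hN (seq (t+1)) hNle
    rw [Real.dist_eq, sub_zero] at hlt
    have hcast : ((((Finset.range (seq (t+1))).filter
        (fun j => (1:ℝ)/2 < |infDist (0:ℝ) (B j) - infDist (0:ℝ) ({0}:Set ℝ)|)).card : ℕ) : ℝ)
        = ((cnt (seq (t+1)) : ℕ) : ℝ) := by
      exact_mod_cast hEq (seq (t+1))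
    rw [hcast] at hlt
    -- lower bound
    have hfs : 0 < f ((seq (t+1) : ℕ) : ℝ) := hfseq (t+1) (by omega)
    have step1 : c * f ((seq (t+1) : ℕ) : ℝ) ≤ f ((seq (t+1) : ℝ) / ((t:ℝ)+1)) := hD t
    have step2 : f ((seq (t+1) : ℝ) / ((t:ℝ)+1)) ≤ f ((m (t+1) : ℕ) : ℝ) := by
      apply hmono (Set.mem_Ici.2 (by positivity)) (Set.mem_Ici.2 (by positivity))
      have := hm_ge_real (t+1) (by omega)
      push_cast at this ⊢
      convert this using 2 <;> push_cast <;> ring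
    have step3 : f ((m (t+1) : ℕ) : ℝ) ≤ f ((cnt (seq (t+1)) : ℕ) : ℝ) := by
      apply hmono (Set.mem_Ici.2 (by positivity)) (Set.mem_Ici.2 (by positivity))
      exact_mod_cast hlow (t+1)
    have hge : c ≤ f ((cnt (seq (t+1)) : ℕ) : ℝ) / f ((seq (t+1) : ℕ) : ℝ) := by
      rw [le_div_iff₀ hfs]
      calc c * f ((seq (t+1) : ℕ) : ℝ) ≤ _ := step1
      _ ≤ _ := step2
      _ ≤ _ := step3
    have habs := le_trans hge (le_abs_self _)
    linarith

theorem exists_stat_not_fstat_of_not_compatible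
    (f : ℝ → ℝ) (hf : IsModulus f) (hnc : ¬ Compatible f) :
    (∃ B : ℕ → Set ℝ, (∀ n, (B n).Nonempty ∧ IsClosed (B n)) ∧
      WijsmanStatConv B ({0} : Set ℝ) ∧ ¬ WijsmanFStatConv f B ({0} : Set ℝ)) ∧
    ((∀ (C : ℕ → Set ℝ) (D : Set ℝ), (∀ n, (C n).Nonempty ∧ IsClosed (C n)) →
        D.Nonempty → IsClosed D → WijsmanStatConv C D → WijsmanFStatConv f C D) →
      Compatible f) := by
  obtain ⟨hf0, hfz, hfsub, hmono, hcont, hunb⟩ := hf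
  have hfpos : 0 < f 1 := by
    rcases lt_or_eq_of_le (hf0 1 (Set.mem_Ici.2 (by norm_num))) with h | h
    · exact h
    · exfalso
      have := (hfz 1 (Set.mem_Ici.2 (by norm_num))).1 h.symm
      norm_num at this
  have key := key_of_not_compatible f hf0 hfpos hmono hnc
  have hmain := construction f hf0 hfpos hmono key
  refine ⟨hmain, fun H => ?_⟩
  exfalso
  obtain ⟨B, hB, hstat, hnf⟩ := hmain
  exact hnf (H B ({0} : Set ℝ) hB (Set.singleton_nonempty 0) isClosed_singleton hstat)
end

section
/- Let (X,d) be a metric space, f any unbounded modulus function, (A_k) a sequence in CL(X) and A ∈ CL(X). If (A_k) is Wijsman f-strong Cesàro convergent to A, then (A_k) is Wijsman strong Cesàro convergent to A. -/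
open Filter Metric Set

theorem wijsman_fcesaro_imp_cesaro {X : Type*} [MetricSpace X]
    (f : ℝ → ℝ) (hf : IsModulus f)
    (A : ℕ → Set X) (B : Set X)
    (hA : ∀ n, (A n).Nonempty ∧ IsClosed (A n)) (hB : B.Nonempty ∧ IsClosed B)
    (h : WijsmanFStrongCesaro f A B) : WijsmanStrongCesaro A B := by
  obtain ⟨hf0, hfiff, hfsub, hfmono, hfcont, hfunb⟩ := hf
  have hmul : ∀ (k : ℕ) (y : ℝ), 0 ≤ y → f ((k : ℝ) * y) ≤ (k : ℝ) * f y := by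
    intro k
    induction k with
    | zero =>
      intro y hy
      simp [(hfiff 0 (Set.mem_Ici.mpr le_rfl)).mpr rfl]
    | succ k ih =>
      intro y hy
      have hk : (0:ℝ) ≤ (k : ℝ) * y := by positivity
      have heq : ((k+1 : ℕ) : ℝ) * y = (k : ℝ) * y + y := by push_cast; ring
      rw [heq]
      calc f ((k : ℝ) * y + y) ≤ f ((k : ℝ) * y) + f y := hfsub _ (Set.mem_Ici.mpr hk) y (Set.mem_Ici.mpr hy)
        _ ≤ (k : ℝ) * f y + f y := by linarith [ih y hy]
        _ = ((k+1 : ℕ) : ℝ) * f y := by push_cast; ring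
  intro x
  have hx := h x
  set a : ℕ → ℝ := fun j => |infDist x (A j) - infDist x B| with ha
  have hS : ∀ n, 0 ≤ ∑ j ∈ Finset.range n, a j :=
    fun n => Finset.sum_nonneg fun j _ => abs_nonneg _
  rw [Metric.tendsto_atTop]
  intro ε hε
  obtain ⟨m, hm⟩ := exists_nat_ge (1/ε)
  set m' : ℕ := m + 1 with hm'def
  have hm' : 1/ε ≤ (m' : ℝ) := by rw [hm'def]; push_cast; linarith
  have hm'pos : (0:ℝ) < (m' : ℝ) := by positivity
  have hδ : (0:ℝ) < 1/(m' : ℝ) := by positivity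
  rw [FStrongCesaro, Metric.tendsto_atTop] at hx
  obtain ⟨N, hN⟩ := hx (1/(m' : ℝ)) hδ
  refine ⟨max N 1, fun n hn => ?_⟩
  have hn1 : 1 ≤ n := le_trans (le_max_right _ _) hn
  have hnN : N ≤ n := le_trans (le_max_left _ _) hn
  have hn0 : (0:ℝ) < (n : ℝ) := by exact_mod_cast hn1
  set S := ∑ j ∈ Finset.range n, a j with hSdef
  have hS0 : 0 ≤ S := hS n
  have hdist : dist (S / (n:ℝ)) 0 = S / (n:ℝ) := by
    rw [Real.dist_eq, sub_zero, abs_of_nonneg (div_nonneg hS0 hn0.le)]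
  rw [hdist]
  by_contra hcon
  push_neg at hcon
  have hSn : ε * (n:ℝ) ≤ S := by
    have := (le_div_iff₀ hn0).mp hcon
    linarith
  have hεn : (0:ℝ) < ε * (n:ℝ) := by positivity
  -- f S > 0
  have hfS : 0 < f S := by
    rcases (hf0 S (Set.mem_Ici.mpr hS0)).lt_or_eq with h' | h'
    · exact h'
    · exfalso
      have := (hfiff S (Set.mem_Ici.mpr hS0)).mp h'.symm
      linarith [hεn.trans_le hSn]
  -- f n ≤ m' * f S
  have hchain : f (n:ℝ) ≤ (m' : ℝ) * f S := by
    have h1 : (n : ℝ) ≤ (m' : ℝ) * (ε * (n:ℝ)) := by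
      have : (1:ℝ) ≤ (m' : ℝ) * ε := by
        rw [div_le_iff₀ hε] at hm'
        linarith
      nlinarith
    have h2 : f (n:ℝ) ≤ f ((m' : ℝ) * (ε * (n:ℝ))) :=
      hfmono (Set.mem_Ici.mpr hn0.le) (Set.mem_Ici.mpr (by positivity)) h1
    have h3 : f ((m' : ℝ) * (ε * (n:ℝ))) ≤ (m' : ℝ) * f (ε * (n:ℝ)) :=
      hmul m' (ε * (n:ℝ)) hεn.le
    have h4 : f (ε * (n:ℝ)) ≤ f S := hfmono (Set.mem_Ici.mpr hεn.le) (Set.mem_Ici.mpr hS0) hSn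
    nlinarith
  -- so f S / f n ≥ 1/m'
  have hfn : 0 < f (n:ℝ) := by
    rcases (hf0 (n:ℝ) (Set.mem_Ici.mpr hn0.le)).lt_or_eq with h' | h'
    · exact h'
    · exfalso
      have := (hfiff (n:ℝ) (Set.mem_Ici.mpr hn0.le)).mp h'.symm
      linarith
  have hge : 1/(m' : ℝ) ≤ f S / f (n:ℝ) := by
    rw [div_le_div_iff₀ hm'pos hfn]
    linarith
  have hlt := hN n hnN
  rw [Real.dist_eq, sub_zero] at hlt
  have : f S / f (n:ℝ) < 1/(m' : ℝ) := lt_of_abs_lt hlt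
  linarith
end

section
/- Let f be an unbounded modulus function that is not compatible. Then there exists a sequence (B_k) of nonempty closed subsets of ℝ (with the usual metric) and B = {0} such that (B_k) is Wijsman strong Cesàro convergent to B but (B_k) is not Wijsman f-strong Cesàro convergent to B. Consequently, if every Wijsman strong Cesàro convergent sequence of closed subsets of ℝ is Wijsman f-strong Cesàro convergent to the same limit, then f is compatible. -/
open Filter Metric Set

/-!
If `f` is not compatible, there are `c > 0` and `ε_m → 0⁺` such that `f (n ε_m) / f n > c` for
infinitely many `n`, for every `m`. Picking such an `n = N_m` for each `m`, the monotone sequence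
`S n = ⨆ m, min n N_m · ε_m` grows sublinearly (because `ε_m → 0`) while `S (N_m) ≥ N_m ε_m`, so
`f (S (N_m)) / f (N_m) > c`. Since `|d(x, {a}) - d(x, {0})| ≤ |a|` with equality at `x = 0`, the
singletons `B_k = {S (k+1) - S k}` converge to `{0}` Wijsman strongly Cesàro but not Wijsman
`f`-strongly Cesàro.
-/

section Modulus

variable {f : ℝ → ℝ}

lemma modPhi_nonneg (hnn : ∀ x ∈ Ici (0:ℝ), 0 ≤ f x) {ε : ℝ} (hε : 0 ≤ ε) :
    0 ≤ modPhi f ε := by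
  refine Real.sInf_nonneg fun a ha => ?_
  obtain ⟨n, hn⟩ := eventually_atTop.1 ha
  exact (div_nonneg (hnn _ (mul_nonneg n.cast_nonneg hε)) (hnn _ (mem_Ici.2 n.cast_nonneg))).trans
    (hn n le_rfl)

lemma frequently_lt_div_of_lt_modPhi (hnn : ∀ x ∈ Ici (0:ℝ), 0 ≤ f x) {ε b : ℝ} (hε : 0 ≤ ε)
    (hb : b < modPhi f ε) : ∃ᶠ n : ℕ in atTop, b < f (n * ε) / f n :=
  frequently_lt_of_lt_limsup (isCoboundedUnder_le_of_le atTop fun n =>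
    div_nonneg (hnn _ (mul_nonneg n.cast_nonneg hε)) (hnn _ (mem_Ici.2 n.cast_nonneg))) hb

lemma exists_seq_frequently_lt_div_of_not_compatible (hnn : ∀ x ∈ Ici (0:ℝ), 0 ≤ f x)
    (hnc : ¬ Compatible f) :
    ∃ c > 0, ∃ ε : ℕ → ℝ, (∀ m, 0 < ε m) ∧ Tendsto ε atTop (nhds 0) ∧
      ∀ m, ∃ᶠ n : ℕ in atTop, c < f (n * ε m) / f n := by
  rw [Compatible, Metric.tendsto_nhds] at hnc
  push Not at hnc
  obtain ⟨c, hc, hfreq⟩ := hnc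
  obtain ⟨ε, hεlim, hε⟩ :=
    exists_seq_forall_of_frequently (hfreq.and_eventually self_mem_nhdsWithin)
  refine ⟨c / 2, half_pos hc, ε, fun m => (hε m).2, hεlim.mono_right nhdsWithin_le_nhds,
    fun m => frequently_lt_div_of_lt_modPhi hnn (hε m).2.le ?_⟩
  have hφ := (hε m).1
  rw [Real.dist_eq, sub_zero, abs_of_nonneg (modPhi_nonneg hnn (hε m).2.le)] at hφ
  linarith

end Modulus

section SupMinMul

/-- `⨆` of an unbounded family of reals is the junk value `0`, hence the boundedness hypotheses
below. -/
noncomputable def supMinMul (N : ℕ → ℕ) (ε : ℕ → ℝ) (n : ℕ) : ℝ :=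
  ⨆ m, min (n : ℝ) (N m) * ε m

variable {N : ℕ → ℕ} {ε : ℕ → ℝ}

lemma supMinMul_zero : supMinMul N ε 0 = 0 := by
  simp [supMinMul]

lemma supMinMul_nonneg (hε0 : ∀ m, 0 ≤ ε m) (n : ℕ) : 0 ≤ supMinMul N ε n :=
  Real.iSup_nonneg fun m => mul_nonneg (le_min n.cast_nonneg (N m).cast_nonneg) (hε0 m)

lemma bddAbove_range_min_mul (hε0 : ∀ m, 0 ≤ ε m) (hε : BddAbove (range ε)) (n : ℕ) :
    BddAbove (range fun m => min (n : ℝ) (N m) * ε m) := by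
  obtain ⟨B, hB⟩ := hε
  refine ⟨n * B, forall_mem_range.2 fun m => ?_⟩
  exact mul_le_mul (min_le_left _ _) (hB (mem_range_self m)) (hε0 m) n.cast_nonneg

lemma monotone_supMinMul (hε0 : ∀ m, 0 ≤ ε m) (hε : BddAbove (range ε)) :
    Monotone (supMinMul N ε) := fun _ _ hnk =>
  ciSup_mono (bddAbove_range_min_mul hε0 hε _) fun m =>
    mul_le_mul_of_nonneg_right (min_le_min_right _ (Nat.cast_le.2 hnk)) (hε0 m)

lemma le_supMinMul (hε0 : ∀ m, 0 ≤ ε m) (hε : BddAbove (range ε)) (m : ℕ) :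
    N m * ε m ≤ supMinMul N ε (N m) :=
  le_ciSup_of_le (bddAbove_range_min_mul hε0 hε _) m (by rw [min_self])

lemma supMinMul_le_add (hε0 : ∀ m, 0 ≤ ε m) {M : ℕ} {δ : ℝ} (hδ : ∀ m ≥ M, ε m ≤ δ) (n : ℕ) :
    supMinMul N ε n ≤ ∑ m ∈ Finset.range M, N m * ε m + n * δ := by
  have hsum : ∀ m, 0 ≤ (N m : ℝ) * ε m := fun m => mul_nonneg (N m).cast_nonneg (hε0 m)
  have hnδ : 0 ≤ (n : ℝ) * δ :=
    mul_nonneg n.cast_nonneg ((hε0 M).trans (hδ M le_rfl))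
  refine ciSup_le fun m => ?_
  rcases lt_or_ge m M with hm | hm
  · calc min (n : ℝ) (N m) * ε m ≤ N m * ε m :=
          mul_le_mul_of_nonneg_right (min_le_right _ _) (hε0 m)
      _ ≤ ∑ m ∈ Finset.range M, N m * ε m :=
          Finset.single_le_sum (fun m _ => hsum m) (Finset.mem_range.2 hm)
      _ ≤ _ := le_add_of_nonneg_right hnδ
  · calc min (n : ℝ) (N m) * ε m ≤ n * δ :=
          mul_le_mul (min_le_left _ _) (hδ m hm) (hε0 m) n.cast_nonneg
      _ ≤ _ := le_add_of_nonneg_left (Finset.sum_nonneg fun m _ => hsum m)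

lemma tendsto_supMinMul_div (hε0 : ∀ m, 0 ≤ ε m) (hε : Tendsto ε atTop (nhds 0)) :
    Tendsto (fun n => supMinMul N ε n / n) atTop (nhds 0) := by
  refine tendsto_order.2 ⟨fun a ha => Eventually.of_forall fun n => ha.trans_le ?_, fun a ha => ?_⟩
  · exact div_nonneg (supMinMul_nonneg hε0 n) n.cast_nonneg
  obtain ⟨M, hM⟩ := eventually_atTop.1 (hε.eventually (ge_mem_nhds (half_pos ha)))
  set C := ∑ m ∈ Finset.range M, (N m : ℝ) * ε m
  filter_upwards [(tendsto_const_div_atTop_nhds_zero_nat C).eventually (gt_mem_nhds (half_pos ha)),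
    eventually_gt_atTop 0] with n hCn hn
  have hn' : (0 : ℝ) < n := Nat.cast_pos.2 hn
  calc supMinMul N ε n / n ≤ (C + n * (a / 2)) / n :=
        div_le_div_of_nonneg_right (supMinMul_le_add hε0 hM n) hn'.le
    _ = C / n + a / 2 := by field_simp
    _ < a := by linarith

end SupMinMul

lemma exists_monotone_tendsto_div_zero_not_tendsto_div_zero {f : ℝ → ℝ}
    (hnn : ∀ x ∈ Ici (0:ℝ), 0 ≤ f x) (hmono : MonotoneOn f (Ici 0)) {c : ℝ} (hc : 0 < c)
    {ε : ℕ → ℝ} (hε0 : ∀ m, 0 ≤ ε m) (hε : Tendsto ε atTop (nhds 0))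
    (hfreq : ∀ m, ∃ᶠ n : ℕ in atTop, c < f (n * ε m) / f n) :
    ∃ S : ℕ → ℝ, Monotone S ∧ S 0 = 0 ∧ Tendsto (fun n => S n / n) atTop (nhds 0) ∧
      ¬ Tendsto (fun n => f (S n) / f n) atTop (nhds 0) := by
  choose N hNm hN using fun m => (hfreq m).forall_exists_of_atTop m
  have hS := monotone_supMinMul (N := N) hε0 hε.bddAbove_range
  refine ⟨supMinMul N ε, hS, supMinMul_zero, tendsto_supMinMul_div hε0 hε, fun h => ?_⟩
  have hlt : ∀ m, c < f (supMinMul N ε (N m)) / f (N m) := fun m =>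
    (hN m).trans_le <| div_le_div_of_nonneg_right
      (hmono (mul_nonneg (N m).cast_nonneg (hε0 m)) (supMinMul_nonneg hε0 _)
        (le_supMinMul hε0 hε.bddAbove_range m))
      (hnn _ (mem_Ici.2 (N m).cast_nonneg))
  obtain ⟨m, hm⟩ :=
    ((h.comp (tendsto_atTop_mono hNm tendsto_id)).eventually (gt_mem_nhds hc)).exists
  exact (hlt m).not_gt hm

section Wijsman

variable {X : Type*} [MetricSpace X] {a : ℕ → X} {b : X}

lemma wijsmanStrongCesaro_singleton
    (h : Tendsto (fun n => (∑ j ∈ Finset.range n, dist (a j) b) / n) atTop (nhds 0)) :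
    WijsmanStrongCesaro (fun j => {a j}) {b} := fun x =>
  squeeze_zero (fun n => by positivity) (fun n => div_le_div_of_nonneg_right
    (Finset.sum_le_sum fun j _ => by
      simpa only [infDist_singleton, dist_comm x] using abs_dist_sub_le (a j) b x)
    n.cast_nonneg) h

lemma WijsmanFStrongCesaro.tendsto_singleton {f : ℝ → ℝ}
    (h : WijsmanFStrongCesaro f (fun j => {a j}) {b}) :
    Tendsto (fun n => f (∑ j ∈ Finset.range n, dist (a j) b) / f n) atTop (nhds 0) := by
  simpa [FStrongCesaro, infDist_singleton, dist_comm b] using h b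

end Wijsman

lemma Monotone.sum_range_dist_sub_zero {S : ℕ → ℝ} (hS : Monotone S) (n : ℕ) :
    ∑ j ∈ Finset.range n, dist (S (j + 1) - S j) 0 = S n - S 0 := by
  simp only [Real.dist_eq, sub_zero]
  rw [← Finset.sum_range_sub]
  exact Finset.sum_congr rfl fun j _ => abs_of_nonneg (sub_nonneg.2 (hS j.le_succ))

theorem exists_cesaro_not_fcesaro_of_not_compatible
    (f : ℝ → ℝ) (hf : IsModulus f) (hnc : ¬ Compatible f) :
    (∃ B : ℕ → Set ℝ, (∀ n, (B n).Nonempty ∧ IsClosed (B n)) ∧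
      WijsmanStrongCesaro B ({0} : Set ℝ) ∧ ¬ WijsmanFStrongCesaro f B ({0} : Set ℝ)) ∧
    ((∀ (C : ℕ → Set ℝ) (D : Set ℝ), (∀ n, (C n).Nonempty ∧ IsClosed (C n)) →
        D.Nonempty → IsClosed D → WijsmanStrongCesaro C D → WijsmanFStrongCesaro f C D) →
      Compatible f) := by
  obtain ⟨hnn, -, -, hmono, -, -⟩ := hf
  obtain ⟨c, hc, ε, hε0, hε, hfreq⟩ := exists_seq_frequently_lt_div_of_not_compatible hnn hnc
  obtain ⟨S, hS, hS0, hSdiv, hSf⟩ :=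
    exists_monotone_tendsto_div_zero_not_tendsto_div_zero hnn hmono hc (fun m => (hε0 m).le)
      hε hfreq
  have hsum (n : ℕ) : ∑ j ∈ Finset.range n, dist (S (j + 1) - S j) 0 = S n := by
    rw [hS.sum_range_dist_sub_zero, hS0, sub_zero]
  have hB (n : ℕ) : ({S (n + 1) - S n} : Set ℝ).Nonempty ∧ IsClosed {S (n + 1) - S n} :=
    ⟨singleton_nonempty _, isClosed_singleton⟩
  have hW : WijsmanStrongCesaro (fun j => {S (j + 1) - S j}) {0} :=
    wijsmanStrongCesaro_singleton (by simpa only [hsum] using hSdiv)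
  have hnW : ¬ WijsmanFStrongCesaro f (fun j => {S (j + 1) - S j}) {0} := fun h =>
    hSf (by simpa only [hsum] using h.tendsto_singleton)
  exact ⟨⟨_, hB, hW, hnW⟩, fun H =>
    absurd (H _ _ hB (singleton_nonempty 0) isClosed_singleton hW) hnW⟩
end

section
/- Let f be an unbounded modulus function that is not compatible. Then there exists a sequence (B_k) of nonempty closed subsets of ℝ (with the usual metric) and B = {0} such that (B_k) is Wijsman f-statistically convergent to B and Wijsman uniformly integrable, but (B_k) is not Wijsman f-strong Cesàro convergent to B. Consequently, if every Wijsman f-statistically convergent and Wijsman uniformly integrable sequence of closed subsets of ℝ is Wijsman f-strong Cesàro convergent to the same limit, then f is compatible. -/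
open Filter Metric Set

noncomputable def chooseSeq (P : ℕ → ℕ → ℕ → Prop) (h : ∀ p M, ∃ n, P p M n) : ℕ → ℕ
  | 0 => 0
  | p + 1 => Classical.choose (h p (chooseSeq P h p))

lemma chooseSeq_spec (P : ℕ → ℕ → ℕ → Prop) (h : ∀ p M, ∃ n, P p M n) (p : ℕ) :
    P p (chooseSeq P h p) (chooseSeq P h (p + 1)) := Classical.choose_spec _

theorem exists_fstat_unifInt_not_fcesaro_of_not_compatible
    (f : ℝ → ℝ) (hf : IsModulus f) (hnc : ¬ Compatible f) :
    (∃ B : ℕ → Set ℝ, (∀ n, (B n).Nonempty ∧ IsClosed (B n)) ∧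
      WijsmanFStatConv f B ({0} : Set ℝ) ∧ WijsmanUnifIntegrable B ∧
      ¬ WijsmanFStrongCesaro f B ({0} : Set ℝ)) ∧
    ((∀ (C : ℕ → Set ℝ) (D : Set ℝ), (∀ n, (C n).Nonempty ∧ IsClosed (C n)) →
        D.Nonempty → IsClosed D → WijsmanFStatConv f C D → WijsmanUnifIntegrable C →
        WijsmanFStrongCesaro f C D) →
      Compatible f) := by
  classical
  obtain ⟨hf0, hfiff, hfsub, hfmono, _hfcont, hfunb⟩ := hf
  unfold Compatible at hnc
  have hf00 : f 0 = 0 := (hfiff 0 (Set.mem_Ici.mpr le_rfl)).mpr rfl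
  have hfnn : ∀ x : ℝ, 0 ≤ x → 0 ≤ f x := fun x hx => hf0 x (Set.mem_Ici.mpr hx)
  have hmono : ∀ a b : ℝ, 0 ≤ a → a ≤ b → f a ≤ f b := fun a b ha hab =>
    hfmono (Set.mem_Ici.mpr ha) (Set.mem_Ici.mpr (le_trans ha hab)) hab
  have hf1 : 0 < f 1 := by
    rcases lt_or_eq_of_le (hfnn 1 zero_le_one) with h | h
    · exact h
    · exact absurd ((hfiff 1 (Set.mem_Ici.mpr zero_le_one)).mp h.symm) one_ne_zero
  have hftop : Tendsto (fun n : ℕ => f (n : ℝ)) atTop atTop := by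
    rw [Filter.tendsto_atTop]
    intro K
    obtain ⟨x, hx0, hxK⟩ := hfunb K
    filter_upwards [eventually_ge_atTop (⌈x⌉₊)] with n hn
    exact le_of_lt (lt_of_lt_of_le hxK (hmono x n hx0 ((Nat.le_ceil x).trans (by exact_mod_cast hn))))
  -- extract c
  obtain ⟨c, hc, hfreq⟩ : ∃ c > (0:ℝ), ∃ᶠ ε in nhdsWithin 0 (Set.Ioi 0), c ≤ |modPhi f ε| := by
    by_contra h
    push_neg at h
    apply hnc
    rw [Metric.tendsto_nhds]
    intro c hc
    have h2 := h c hc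
    filter_upwards [h2] with ε hε
    simpa [Real.dist_eq] using hε
  -- choose eps p
  have hepsex : ∀ p : ℕ, ∃ ε : ℝ, 0 < ε ∧ ε < 1 / ((p:ℝ) + 1) ∧ c ≤ |modPhi f ε| := by
    intro p
    have hmem : Set.Ioo (0:ℝ) (1/((p:ℝ)+1)) ∈ nhdsWithin 0 (Set.Ioi 0) :=
      Ioo_mem_nhdsGT_of_mem ⟨le_refl 0, by positivity⟩
    obtain ⟨ε, hP, hε⟩ := (hfreq.and_eventually (eventually_of_mem hmem fun x hx => hx)).exists
    exact ⟨ε, hε.1, hε.2, hP⟩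
  choose eps heps0 heps1 hepsc using hepsex
  have heps_le1 : ∀ p, eps p ≤ 1 := by
    intro p
    refine le_trans (heps1 p).le ?_
    rw [div_le_one (by positivity)]
    have : (0:ℝ) ≤ p := Nat.cast_nonneg p
    linarith
  -- bounds on u
  have hu0 : ∀ p n : ℕ, 0 ≤ f ((n:ℝ) * eps p) / f (n:ℝ) := fun p n =>
    div_nonneg (hfnn _ (mul_nonneg (Nat.cast_nonneg n) (heps0 p).le)) (hfnn _ (Nat.cast_nonneg n))
  have hu1 : ∀ p n : ℕ, f ((n:ℝ) * eps p) / f (n:ℝ) ≤ 1 := by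
    intro p n
    rcases Nat.eq_zero_or_pos n with rfl | hn
    · simp [hf00]
    · have hfn : 0 < f (n:ℝ) :=
        lt_of_lt_of_le hf1 (hmono 1 n zero_le_one (by exact_mod_cast hn))
      rw [div_le_one hfn]
      have : (n:ℝ) * eps p ≤ (n:ℝ) := by
        nlinarith [heps0 p, heps_le1 p, Nat.cast_nonneg (α := ℝ) n]
      exact hmono _ _ (mul_nonneg (Nat.cast_nonneg n) (heps0 p).le) this
  have hphi_nn : ∀ p, 0 ≤ modPhi f (eps p) := by
    intro p
    exact le_limsup_of_frequently_le (Frequently.of_forall fun n => hu0 p n)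
      (isBoundedUnder_of ⟨1, fun n => hu1 p n⟩)
  have hfreqn : ∀ p, ∃ᶠ n : ℕ in atTop, c/2 < f ((n:ℝ) * eps p) / f (n:ℝ) := by
    intro p
    have h1 : c ≤ modPhi f (eps p) := by
      have := hepsc p; rwa [abs_of_nonneg (hphi_nn p)] at this
    exact frequently_lt_of_lt_limsup
      (isCoboundedUnder_le_of_le _ fun n => hu0 p n)
      (lt_of_lt_of_le (half_lt_self hc) h1)
  have hstep : ∀ p M : ℕ, ∃ n : ℕ,
      M < n ∧ (c/2) * f (n:ℝ) < f ((n:ℝ) * eps p) ∧ f (M:ℝ) < (c/4) * f (n:ℝ) := by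
    intro p M
    have hev : ∀ᶠ n : ℕ in atTop, M < n ∧ f (M:ℝ) < (c/4) * f (n:ℝ) := by
      filter_upwards [hftop.eventually_ge_atTop ((4/c) * f (M:ℝ) + 1), eventually_gt_atTop M]
        with n hn hn'
      refine ⟨hn', ?_⟩
      have h4 : (c/4) * ((4/c) * f (M:ℝ) + 1) = f (M:ℝ) + c/4 := by field_simp
      nlinarith
    obtain ⟨n, hq, hn, hfM⟩ := ((hfreqn p).and_eventually hev).exists
    refine ⟨n, hn, ?_, hfM⟩
    have hnpos : 0 < f (n:ℝ) := by
      rcases Nat.eq_zero_or_pos n with rfl | hn0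
      · simp [hf00] at hq; linarith
      · exact lt_of_lt_of_le hf1 (hmono 1 n zero_le_one (by exact_mod_cast hn0))
    exact (lt_div_iff₀ hnpos).mp hq
  -- build N
  set P : ℕ → ℕ → ℕ → Prop := fun p M n =>
    M < n ∧ (c/2) * f (n:ℝ) < f ((n:ℝ) * eps p) ∧ f (M:ℝ) < (c/4) * f (n:ℝ) with hPdef
  set N : ℕ → ℕ := chooseSeq P hstep with hNdef
  have hN0 : N 0 = 0 := rfl
  have hNspec : ∀ p, N p < N (p+1) ∧ (c/2) * f ((N (p+1):ℝ)) < f ((N (p+1):ℝ) * eps p) ∧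
      f ((N p:ℝ)) < (c/4) * f ((N (p+1):ℝ)) := fun p => chooseSeq_spec P hstep p
  have hNmono : StrictMono N := strictMono_nat_of_lt_succ fun p => (hNspec p).1
  have hNge : ∀ p, p ≤ N p := fun p => hNmono.le_apply
  -- blocks
  set blk : ℕ → ℕ := fun j => Nat.findGreatest (fun p => N p ≤ j) j with hblkdef
  set x : ℕ → ℝ := fun j => eps (blk j) with hxdef
  have hblk_le : ∀ j, N (blk j) ≤ j := fun j =>
    Nat.findGreatest_spec (P := fun p => N p ≤ j) (m := 0) (Nat.zero_le j) (by simp [hN0])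
  have hblk_ge : ∀ p j, N p ≤ j → p ≤ blk j := fun p j h =>
    Nat.le_findGreatest (le_trans (hNge p) h) h
  have hblk_eq : ∀ p j, N p ≤ j → j < N (p+1) → blk j = p := by
    intro p j h1 h2
    refine le_antisymm ?_ (hblk_ge p j h1)
    by_contra h
    push_neg at h
    exact absurd (hblk_le j) (not_le.mpr (lt_of_lt_of_le h2 (hNmono.monotone h)))
  have hx_pos : ∀ j, 0 < x j := fun j => heps0 _
  have hx_le1 : ∀ j, x j ≤ 1 := fun j => heps_le1 _
  have hx_small : ∀ p j, N p ≤ j → x j ≤ 1 / ((p:ℝ)+1) := by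
    intro p j h
    have h1 : (p:ℝ) + 1 ≤ (blk j : ℝ) + 1 := by
      have := hblk_ge p j h; exact_mod_cast Nat.succ_le_succ this
    refine le_trans (heps1 (blk j)).le ?_
    exact one_div_le_one_div_of_le (by positivity) h1
  set B : ℕ → Set ℝ := fun j => {x j} with hBdef
  have hd : ∀ (t : ℝ) (j : ℕ), infDist t (B j) = |t - x j| := by
    intro t j; simp [hBdef, Real.dist_eq]
  have hd0 : ∀ t : ℝ, infDist t ({0} : Set ℝ) = |t| := by
    intro t; simp [Real.dist_eq]
  have hdiff_le : ∀ (t : ℝ) (j : ℕ), |infDist t (B j) - infDist t ({0}:Set ℝ)| ≤ x j := by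
    intro t j
    rw [hd, hd0]
    have h1 := abs_abs_sub_abs_le_abs_sub (t - x j) t
    have h2 : (t - x j) - t = -(x j) := by ring
    rw [h2, abs_neg, abs_of_pos (hx_pos j)] at h1
    exact h1
  -- Wijsman f-statistical convergence
  have hstat : WijsmanFStatConv f B ({0} : Set ℝ) := by
    intro t ε hε
    obtain ⟨p1, hp1⟩ : ∃ p1 : ℕ, 1 / ((p1:ℝ) + 1) ≤ ε := by
      obtain ⟨p1, hp1⟩ := exists_nat_ge (1/ε)
      refine ⟨p1, ?_⟩
      rw [div_le_iff₀ (by positivity)]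
      have h3 : ε * (1/ε) = 1 := by field_simp
      nlinarith [mul_le_mul_of_nonneg_left hp1 hε.le]
    have hcard : ∀ n : ℕ, (((Finset.range n).filter
        (fun j => ε < |infDist t (B j) - infDist t ({0}:Set ℝ)|)).card : ℝ) ≤ (N p1 : ℝ) := by
      intro n
      have hsub : ((Finset.range n).filter
          (fun j => ε < |infDist t (B j) - infDist t ({0}:Set ℝ)|)) ⊆ Finset.range (N p1) := by
        intro j hj
        simp only [Finset.mem_filter, Finset.mem_range] at hj ⊢
        by_contra h
        push_neg at h
        have hxj : x j ≤ ε := le_trans (hx_small p1 j h) hp1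
        linarith [hj.2, hdiff_le t j]
      have h4 := Finset.card_le_card hsub
      rw [Finset.card_range] at h4
      exact_mod_cast h4
    have h0 : Tendsto (fun n : ℕ => f ((N p1 : ℝ)) / f (n:ℝ)) atTop (nhds 0) :=
      Tendsto.div_atTop tendsto_const_nhds hftop
    refine tendsto_of_tendsto_of_tendsto_of_le_of_le tendsto_const_nhds h0 ?_ ?_
    · intro n
      exact div_nonneg (hfnn _ (Nat.cast_nonneg _)) (hfnn _ (Nat.cast_nonneg _))
    · intro n
      exact div_le_div_of_nonneg_right
        (hmono _ _ (Nat.cast_nonneg _) (hcard n)) (hfnn (n:ℝ) (Nat.cast_nonneg n))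
  -- Wijsman uniform integrability
  have hui : WijsmanUnifIntegrable B := by
    intro t
    unfold UnifIntegrable
    have hev : ∀ᶠ cc : ℝ in atTop,
        (⨆ n : ℕ, (∑ j ∈ Finset.range n,
          if cc ≤ |infDist t (B j)| then |infDist t (B j)| else 0) / (n : ℝ)) = 0 := by
      filter_upwards [eventually_ge_atTop (|t| + 2)] with cc hcc
      have hcond : ∀ j : ℕ, ¬ (cc ≤ |infDist t (B j)|) := by
        intro j
        rw [hd t j, abs_of_nonneg (abs_nonneg _)]
        push_neg
        calc |t - x j| ≤ |t| + |x j| := abs_sub _ _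
          _ ≤ |t| + 1 := by rw [abs_of_pos (hx_pos j)]; linarith [hx_le1 j]
          _ < cc := by linarith
      have hz : ∀ n : ℕ, (∑ j ∈ Finset.range n,
          if cc ≤ |infDist t (B j)| then |infDist t (B j)| else 0) = 0 := by
        intro n
        apply Finset.sum_eq_zero
        intro j _
        rw [if_neg (hcond j)]
      simp only [hz, zero_div, ciSup_const]
    exact Tendsto.congr' (by filter_upwards [hev] with cc h using h.symm) tendsto_const_nhds
  -- not Wijsman f-strong Cesaro
  have hnces : ¬ WijsmanFStrongCesaro f B ({0} : Set ℝ) := by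
    intro hces
    have h0 := hces 0
    unfold FStrongCesaro at h0
    have hrw : ∀ n : ℕ,
        (∑ j ∈ Finset.range n, |infDist (0:ℝ) (B j) - infDist (0:ℝ) ({0}:Set ℝ)|)
          = ∑ j ∈ Finset.range n, x j := by
      intro n
      refine Finset.sum_congr rfl fun j _ => ?_
      rw [hd, hd0]
      simp [abs_of_pos (hx_pos j)]
    have hfNpos : ∀ p : ℕ, 0 < f ((N (p+1) : ℝ)) := by
      intro p
      have h1 : 1 ≤ N (p+1) := le_trans (Nat.succ_le_succ (Nat.zero_le p)) (hNge (p+1))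
      exact lt_of_lt_of_le hf1 (hmono 1 _ zero_le_one (by exact_mod_cast h1))
    have hlb : ∀ p : ℕ, c/4 ≤ f (∑ j ∈ Finset.range (N (p+1)), x j) / f ((N (p+1) : ℝ)) := by
      intro p
      obtain ⟨h1, h2, h3⟩ := hNspec p
      have hNcast : (N p : ℝ) ≤ (N (p+1) : ℝ) := Nat.cast_le.mpr h1.le
      have hsum : eps p * ((N (p+1) : ℝ) - (N p : ℝ)) ≤ ∑ j ∈ Finset.range (N (p+1)), x j := by
        have hval : ∀ j ∈ Finset.Ico (N p) (N (p+1)), x j = eps p := by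
          intro j hj
          rw [Finset.mem_Ico] at hj
          have hb : blk j = p := hblk_eq p j hj.1 hj.2
          simp [hxdef, hb]
        have hIco : ∑ j ∈ Finset.Ico (N p) (N (p+1)), x j
            = ((N (p+1) - N p : ℕ) : ℝ) * eps p := by
          rw [Finset.sum_congr rfl hval, Finset.sum_const, Nat.card_Ico, nsmul_eq_mul]
        have hcast : ((N (p+1) - N p : ℕ) : ℝ) = (N (p+1) : ℝ) - (N p : ℝ) :=
          Nat.cast_sub h1.le
        have hsub2 : Finset.Ico (N p) (N (p+1)) ⊆ Finset.range (N (p+1)) := by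
          intro j hj
          rw [Finset.mem_Ico] at hj
          exact Finset.mem_range.mpr hj.2
        calc eps p * ((N (p+1):ℝ) - (N p:ℝ)) = ∑ j ∈ Finset.Ico (N p) (N (p+1)), x j := by
              rw [hIco, hcast]; ring
          _ ≤ ∑ j ∈ Finset.range (N (p+1)), x j :=
              Finset.sum_le_sum_of_subset_of_nonneg hsub2 (fun j _ _ => (hx_pos j).le)
      have e0 : (0:ℝ) ≤ eps p * ((N (p+1):ℝ) - (N p:ℝ)) :=
        mul_nonneg (heps0 p).le (by linarith)
      have esub : f ((N (p+1):ℝ) * eps p)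
          ≤ f (eps p * ((N (p+1):ℝ) - (N p:ℝ))) + f ((N p:ℝ) * eps p) := by
        have h5 := hfsub (eps p * ((N (p+1):ℝ) - (N p:ℝ))) (Set.mem_Ici.mpr e0)
          ((N p:ℝ) * eps p) (Set.mem_Ici.mpr (mul_nonneg (Nat.cast_nonneg _) (heps0 p).le))
        have heq : eps p * ((N (p+1):ℝ) - (N p:ℝ)) + (N p:ℝ) * eps p
            = (N (p+1):ℝ) * eps p := by ring
        rwa [heq] at h5
      have eNp : f ((N p:ℝ) * eps p) ≤ f ((N p:ℝ)) := by
        apply hmono _ _ (mul_nonneg (Nat.cast_nonneg _) (heps0 p).le)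
        nlinarith [heps_le1 p, heps0 p, Nat.cast_nonneg (α := ℝ) (N p)]
      have emid : f (eps p * ((N (p+1):ℝ) - (N p:ℝ)))
          ≤ f (∑ j ∈ Finset.range (N (p+1)), x j) := hmono _ _ e0 hsum
      rw [le_div_iff₀ (hfNpos p)]
      linarith [h2, h3, esub, eNp, emid]
    have hev := h0.eventually_lt_const (show (0:ℝ) < c/4 by positivity)
    rw [eventually_atTop] at hev
    obtain ⟨M, hM⟩ := hev
    have hMle : M ≤ N (M+1) := le_trans (Nat.le_succ M) (hNge (M+1))
    have hMlt := hM (N (M+1)) hMle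
    simp only [hrw] at hMlt
    exact absurd hMlt (not_lt.mpr (hlb M))
  refine ⟨⟨B, fun n => ⟨Set.singleton_nonempty _, isClosed_singleton⟩, hstat, hui, hnces⟩, ?_⟩
  intro H
  exact ((hnces (H B {0} (fun n => ⟨Set.singleton_nonempty _, isClosed_singleton⟩)
    (Set.singleton_nonempty 0) isClosed_singleton hstat hui))).elim
end

section
/- Let (X,d) be a metric space, θ=(k_r) a lacunary sequence, f any unbounded modulus function, (A_k) a sequence in CL(X) and A ∈ CL(X). If (A_k) is Wijsman θ-lacunary f-statistically convergent to A, then (A_k) is Wijsman θ-lacunary statistically convergent to A. -/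
open Filter Metric Set

namespace IsModulus

variable {f : ℝ → ℝ}

theorem le_natCast_mul (hf : IsModulus f) (n : ℕ) {y : ℝ} (hy : 0 ≤ y) :
    f (n * y) ≤ n * f y := by
  induction n with
  | zero => simp [hf.map_zero]
  | succ n ih =>
    calc f ((n + 1 : ℕ) * y) = f (n * y + y) := by push_cast; ring_nf
      _ ≤ f (n * y) + f y := hf.2.2.1 _ (mem_Ici.2 (by positivity)) _ hy
      _ ≤ n * f y + f y := by linarith
      _ = (n + 1 : ℕ) * f y := by push_cast; ring

theorem le_natCast_mul_of_le (hf : IsModulus f) (n : ℕ) {x y : ℝ} (hx : 0 ≤ x) (hy : 0 ≤ y)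
    (hxy : x ≤ n * y) : f x ≤ n * f y :=
  (hf.2.2.2.1 hx (mem_Ici.2 (by positivity)) hxy).trans (hf.le_natCast_mul n hy)

/-- If `c / h ≥ δ` then `f h ≤ ⌈1/δ⌉ f c` by subadditivity, so `f c / f h` stays above `1/⌈1/δ⌉`. -/
theorem tendsto_div_of_tendsto_map_div (hf : IsModulus f) {α : Type*} {l : Filter α}
    {c h : α → ℝ} (hc : ∀ᶠ a in l, 0 ≤ c a) (hh : ∀ᶠ a in l, 0 < h a)
    (hlim : Tendsto (fun a => f (c a) / f (h a)) l (nhds 0)) :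
    Tendsto (fun a => c a / h a) l (nhds 0) := by
  refine tendsto_order.2 ⟨fun b hb => ?_, fun δ hδ => ?_⟩
  · filter_upwards [hc, hh] with a hca hha
    exact hb.trans_le (div_nonneg hca hha.le)
  set m : ℕ := ⌈1 / δ⌉₊
  have hm : (0 : ℝ) < m := Nat.cast_pos.2 (Nat.ceil_pos.2 (by positivity))
  filter_upwards [hc, hh, hlim.eventually_lt_const (one_div_pos.2 hm)] with a hca hha hlt
  by_contra! hge
  have hh_le : h a ≤ m * c a :=
    calc h a ≤ c a / δ := by rwa [le_div_iff₀ hδ, mul_comm, ← le_div_iff₀ hha]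
      _ = 1 / δ * c a := by ring
      _ ≤ m * c a := mul_le_mul_of_nonneg_right (Nat.le_ceil _) hca
  have hfh := hf.pos hha
  have hratio : 1 / (m : ℝ) ≤ f (c a) / f (h a) := by
    rw [le_div_iff₀ hfh, one_div, inv_mul_le_iff₀ hm]
    exact hf.le_natCast_mul_of_le m hha.le hca hh_le
  linarith

end IsModulus

theorem lacH_pos {k : ℕ → ℕ} (hk : StrictMono k) (r : ℕ) : 0 < lacH k r :=
  Nat.sub_pos_of_lt (hk r.lt_succ_self)

theorem wijsman_lac_fstat_imp_lac_stat_general {X : Type*} [MetricSpace X]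
    (k : ℕ → ℕ) (hk : IsLacunary k) (f : ℝ → ℝ) (hf : IsModulus f)
    (A : ℕ → Set X) (B : Set X)
    (h : WijsmanLacFStatConv f k A B) : WijsmanLacStatConv k A B := fun x ε hε =>
  hf.tendsto_div_of_tendsto_map_div (.of_forall fun _ => Nat.cast_nonneg _)
    (.of_forall fun r => Nat.cast_pos.2 (lacH_pos hk.2.1 r)) (h x ε hε)

theorem wijsman_lac_fstat_imp_lac_stat {X : Type*} [MetricSpace X]
    (k : ℕ → ℕ) (hk : IsLacunary k) (f : ℝ → ℝ) (hf : IsModulus f)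
    (A : ℕ → Set X) (B : Set X)
    (hA : ∀ n, (A n).Nonempty ∧ IsClosed (A n)) (hB : B.Nonempty ∧ IsClosed B)
    (h : WijsmanLacFStatConv f k A B) : WijsmanLacStatConv k A B :=
  wijsman_lac_fstat_imp_lac_stat_general k hk f hf A B h
end

section
/- Let (X,d) be a metric space, θ=(k_r) a lacunary sequence, and f an unbounded modulus function that is θ-compatible. If a sequence (A_k) in CL(X) is Wijsman θ-lacunary statistically convergent to A ∈ CL(X), then (A_k) is Wijsman θ-lacunary f-statistically convergent to A. -/
/-!
For `0 < ε ≤ 1`, lacunary statistical convergence makes the exceptional count `c_r` at most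
`ε h_r` for large `r`, so by monotonicity `f c_r / f h_r ≤ f (ε h_r) / f h_r`, whose limsup is
`φ_θ(ε)`. Letting `ε → 0⁺`, θ-compatibility forces `f c_r / f h_r → 0`.
-/

open Filter Metric Set

open Topology

lemma div_apply_mul_le_one {f : ℝ → ℝ} (hf0 : ∀ x ∈ Ici (0 : ℝ), 0 ≤ f x)
    (hfm : MonotoneOn f (Ici 0)) {a ε : ℝ} (ha : 0 ≤ a) (hε0 : 0 ≤ ε) (hε1 : ε ≤ 1) :
    f (a * ε) / f a ≤ 1 :=
  div_le_one_of_le₀ (hfm (mul_nonneg ha hε0) ha (mul_le_of_le_one_right ha hε1)) (hf0 a ha)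

lemma div_apply_le_of_div_lt {f : ℝ → ℝ} (hf0 : ∀ x ∈ Ici (0 : ℝ), 0 ≤ f x)
    (hfm : MonotoneOn f (Ici 0)) (hf00 : f 0 = 0) {a c ε : ℝ} (ha : 0 ≤ a) (hc : 0 ≤ c)
    (hε : 0 ≤ ε) (hca : c / a < ε) : f c / f a ≤ f (a * ε) / f a := by
  rcases ha.eq_or_lt with rfl | ha
  · -- both sides divide by `f 0 = 0`, hence are `0` in Lean
    simp [hf00]
  have hc_le : c ≤ a * ε := by
    rw [div_lt_iff₀ ha] at hca
    linarith
  exact div_le_div_of_nonneg_right (hfm hc (mul_nonneg ha.le hε) hc_le) (hf0 a ha.le)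

lemma eventually_lt_of_modPhiTheta_lt {f : ℝ → ℝ} (hf0 : ∀ x ∈ Ici (0 : ℝ), 0 ≤ f x)
    (hfm : MonotoneOn f (Ici 0)) {k : ℕ → ℕ} {ε δ : ℝ} (hε0 : 0 ≤ ε) (hε1 : ε ≤ 1)
    (hφ : modPhiTheta f k ε < δ) :
    ∀ᶠ t in atTop, f ((lacH k t : ℝ) * ε) / f (lacH k t) < δ :=
  eventually_lt_of_limsup_lt hφ <|
    isBoundedUnder_of ⟨1, fun _ => div_apply_mul_le_one hf0 hfm (Nat.cast_nonneg _) hε0 hε1⟩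

theorem tendsto_div_apply_lacH_of_tendsto_div {f : ℝ → ℝ}
    (hf0 : ∀ x ∈ Ici (0 : ℝ), 0 ≤ f x) (hfm : MonotoneOn f (Ici 0)) (hf00 : f 0 = 0)
    {k : ℕ → ℕ} (hfc : ThetaCompatible f k) {c : ℕ → ℕ}
    (hc : Tendsto (fun r => (c r : ℝ) / lacH k r) atTop (𝓝 0)) :
    Tendsto (fun r => f (c r) / f (lacH k r)) atTop (𝓝 0) := by
  have hnonneg (r : ℕ) : 0 ≤ f (c r) / f (lacH k r) :=
    div_nonneg (hf0 _ (Nat.cast_nonneg (α := ℝ) _)) (hf0 _ (Nat.cast_nonneg (α := ℝ) _))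
  refine tendsto_order.2 ⟨fun a ha => Eventually.of_forall fun r => ha.trans_le (hnonneg r),
    fun δ hδ => ?_⟩
  obtain ⟨ε, hφ, hε0, hε1⟩ :=
    ((hfc.eventually (gt_mem_nhds hδ)).and (Ioc_mem_nhdsGT one_pos)).exists
  filter_upwards [eventually_lt_of_modPhiTheta_lt hf0 hfm hε0.le hε1 hφ,
    hc.eventually (gt_mem_nhds hε0)] with r hr hcr
  exact (div_apply_le_of_div_lt hf0 hfm hf00 (Nat.cast_nonneg _) (Nat.cast_nonneg _) hε0.le
    hcr).trans_lt hr

theorem wijsman_lac_stat_imp_lac_fstat_of_thetaCompatible_general {X : Type*}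
    [MetricSpace X] (k : ℕ → ℕ)
    (f : ℝ → ℝ) (hf : IsModulus f) (hfc : ThetaCompatible f k)
    (A : ℕ → Set X) (B : Set X)
    (h : WijsmanLacStatConv k A B) : WijsmanLacFStatConv f k A B :=
  fun x ε hε => tendsto_div_apply_lacH_of_tendsto_div hf.1 hf.2.2.2.1
    ((hf.2.1 0 self_mem_Ici).2 rfl) hfc (h x ε hε)

theorem wijsman_lac_stat_imp_lac_fstat_of_thetaCompatible {X : Type*}
    [MetricSpace X] (k : ℕ → ℕ) (hk : IsLacunary k)
    (f : ℝ → ℝ) (hf : IsModulus f) (hfc : ThetaCompatible f k)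
    (A : ℕ → Set X) (B : Set X)
    (hA : ∀ n, (A n).Nonempty ∧ IsClosed (A n)) (hB : B.Nonempty ∧ IsClosed B)
    (h : WijsmanLacStatConv k A B) : WijsmanLacFStatConv f k A B :=
  wijsman_lac_stat_imp_lac_fstat_of_thetaCompatible_general k f hf hfc A B h
end
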